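/- Let s > 2 and suppose G acts faithfully and transitively on a finite set X of size n with n ≠ s². Then all orbits of the translation subgroup T on X have a common size k > 1, the number m of T-orbits satisfies n = k·m with m > 1, there exist positive integers a and b with s = lcm(a, b) and k = a·b, and m·s² divides the order of G. -/

import Mathlib

/-!
Writing `u = ρ0 · (ρ1ρ2ρ1)` and `v = (ρ1ρ0ρ1) · ρ2`, the Coxeter relations say that each factor
of `u` commutes with each factor of `v`, and that conjugation by each `ρi` sends `u`, `v` into
`{u, v, u⁻¹, v⁻¹}`. So `T = ⟨u, v⟩` is an abelian normal subgroup with `|T| ≤ s²`, while `G/T` is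
generated by the two involutions `ρ0T`, `ρ1T` whose product has order dividing `4`, so
`[G : T] ≤ 8`; from `|G| = 8s²` we get `|T| = s²` and `orderOf u = s`.

Since `T` is normal and `G` is transitive, all `T`-orbits have one size `k`, which divides
`|T| = s²`. Since `T` is abelian, the stabilizer of a point is normal of index `k` in `T`, so
`t ^ k` fixes every point for `t ∈ T`; faithfulness gives `u ^ k = 1`, hence `s ∣ k`, and
`k = s · (k / s)` with `lcm s (k / s) = s`. A single `T`-orbit would make `T` act regularly,
forcing `n = s²`. Finally `|T_x|` divides `|G_x|`, and orbit–stabilizer turns this into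
`m · |T| ∣ |G|`.
-/

open Subgroup MulAction
open scoped Pointwise IsMulCommutative

theorem Nat.exists_lcm_eq_of_dvd_of_dvd_sq {s k : ℕ} (hs : 0 < s) (hsk : s ∣ k)
    (hks : k ∣ s ^ 2) : ∃ a b, 0 < a ∧ 0 < b ∧ s = Nat.lcm a b ∧ k = a * b := by
  obtain ⟨b, rfl⟩ := hsk
  have hb : b ∣ s := Nat.dvd_of_mul_dvd_mul_left hs (by rwa [← sq])
  exact ⟨s, b, hs, Nat.pos_of_dvd_of_pos hb hs, (Nat.lcm_eq_left hb).symm, rfl⟩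

section Groups

variable {G : Type*} [Group G]

theorem inv_eq_of_sq_eq_one {a : G} (ha : a ^ 2 = 1) : a⁻¹ = a :=
  inv_eq_of_mul_eq_one_right (by rwa [← sq])

theorem commute_of_sq_eq_one {a b : G} (ha : a ^ 2 = 1) (hb : b ^ 2 = 1)
    (hab : (a * b) ^ 2 = 1) : Commute a b :=
  calc a * b = (a * b)⁻¹ := (inv_eq_of_sq_eq_one hab).symm
    _ = b * a := by rw [mul_inv_rev, inv_eq_of_sq_eq_one ha, inv_eq_of_sq_eq_one hb]

theorem commute_mul_mul_of_pow_four_eq_one {a b : G} (ha : a ^ 2 = 1) (hb : b ^ 2 = 1)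
    (hab : (a * b) ^ 4 = 1) : Commute a (b * a * b) := by
  refine commute_of_sq_eq_one ha ?_ ?_
  · have h := conj_pow (a := b) (b := a) (i := 2)
    rwa [inv_eq_of_sq_eq_one hb, ha, mul_one, ← sq, hb] at h
  · rw [← hab, show 4 = 2 * 2 from rfl, pow_mul, sq (a * b)]
    simp only [mul_assoc]

theorem mul_pow_eq_one_comm {a b : G} {n : ℕ} (h : (a * b) ^ n = 1) : (b * a) ^ n = 1 := by
  rw [show b * a = a⁻¹ * (a * b) * a⁻¹⁻¹ by group, conj_pow, h]
  group

theorem mem_normalizer_of_conj_mem [Finite G] {H : Subgroup G} {g : G}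
    (h : ∀ x ∈ H, g * x * g⁻¹ ∈ H) : g ∈ normalizer (H : Set G) := by
  rw [mem_normalizer_iff_map_conj_eq]
  refine eq_of_le_of_card_ge ?_ (card_map_of_injective (MulAut.conj g).injective).ge
  rintro _ ⟨x, hx, rfl⟩
  exact h x hx

theorem normal_closure_of_conj_mem [Finite G] {S R : Set G} (hS : closure S = ⊤)
    (h : ∀ g ∈ S, ∀ r ∈ R, g * r * g⁻¹ ∈ closure R) : (closure R).Normal := by
  rw [← normalizer_eq_top_iff, eq_top_iff, ← hS, closure_le]
  intro g hg
  refine mem_normalizer_of_conj_mem fun x hx => ?_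
  have hmap : (closure R).map (MulAut.conj g).toMonoidHom ≤ closure R := by
    rw [MonoidHom.map_closure, closure_le]
    rintro _ ⟨r, hr, rfl⟩
    exact h g hg r hr
  exact hmap ⟨x, hx, rfl⟩

theorem card_zpowers_sup_le {x y : G} (h : zpowers y ≤ normalizer (zpowers x : Set G)) :
    Nat.card (zpowers x ⊔ zpowers y : Subgroup G) ≤ orderOf x * orderOf y :=
  calc Nat.card (zpowers x ⊔ zpowers y : Subgroup G)
      = Nat.card ((zpowers x : Set G) * (zpowers y : Set G)) := by
        rw [← coe_mul_of_right_le_normalizer_left _ _ h]; rfl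
    _ ≤ orderOf x * orderOf y := by
        simpa only [SetLike.coe_sort_coe, Nat.card_zpowers] using
          Set.natCard_mul_le (s := (zpowers x : Set G)) (t := zpowers y)

theorem card_closure_pair_le_of_commute {x y : G} (h : Commute x y) :
    Nat.card (closure {x, y}) ≤ orderOf x * orderOf y := by
  rw [Set.insert_eq, Subgroup.closure_union, ← zpowers_eq_closure, ← zpowers_eq_closure]
  refine card_zpowers_sup_le (le_trans ?_ (centralizer_le_normalizer _))
  rw [zpowers_le, mem_centralizer_iff]
  rintro _ ⟨n, rfl⟩
  exact (h.zpow_left n).eq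

theorem isMulCommutative_closure_pair {x y : G} (h : Commute x y) :
    IsMulCommutative (closure {x, y}) := by
  refine isMulCommutative_closure ?_
  simp only [Set.mem_insert_iff, Set.mem_singleton_iff, forall_eq_or_imp, forall_eq]
  exact ⟨⟨trivial, h.eq⟩, h.eq.symm, trivial⟩

/-- `G = ⟨a * b⟩ ⟨a⟩`, because conjugation by `a` inverts `a * b`. -/
theorem card_le_two_mul_orderOf_mul [Finite G] {a b : G} (ha : a ^ 2 = 1) (hb : b ^ 2 = 1)
    (hgen : closure {a, b} = ⊤) : Nat.card G ≤ 2 * orderOf (a * b) := by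
  have hsup : zpowers (a * b) ⊔ zpowers a = ⊤ := by
    rw [eq_top_iff, ← hgen, closure_le, Set.insert_subset_iff, Set.singleton_subset_iff]
    refine ⟨mem_sup_right (mem_zpowers a), ?_⟩
    simpa using mul_mem (mem_sup_right (inv_mem (mem_zpowers a)))
      (mem_sup_left (mem_zpowers (a * b)))
  have hnorm : zpowers a ≤ normalizer (zpowers (a * b) : Set G) := by
    rw [zpowers_le]
    refine mem_normalizer_of_conj_mem ?_
    rintro _ ⟨n, rfl⟩
    have hconj : a * (a * b) * a⁻¹ = (a * b)⁻¹ := by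
      rw [mul_inv_rev, inv_eq_of_sq_eq_one ha, inv_eq_of_sq_eq_one hb, ← mul_assoc, ← sq, ha,
        one_mul]
    exact ⟨-n, by simp only [← conj_zpow, hconj, inv_zpow, zpow_neg]⟩
  calc Nat.card G = Nat.card (zpowers (a * b) ⊔ zpowers a : Subgroup G) := by
        rw [hsup, card_top]
    _ ≤ orderOf (a * b) * orderOf a := card_zpowers_sup_le hnorm
    _ ≤ 2 * orderOf (a * b) := by
        rw [mul_comm]
        exact Nat.mul_le_mul_right _ (orderOf_le_of_pow_eq_one two_pos ha)

end Groups

section Actions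

theorem nonempty_of_faithfulSMul {M α : Type*} [SMul M α] [Nontrivial M] [FaithfulSMul M α] :
    Nonempty α := by
  obtain ⟨g, h, hgh⟩ := exists_pair_ne M
  by_contra hα
  exact hgh (eq_of_smul_eq_smul fun x => (hα ⟨x⟩).elim)

variable {G X : Type*} [Group G] [MulAction G X]

theorem card_orbit_dvd_card [Finite G] (x : X) : Nat.card (orbit G x) ∣ Nat.card G := by
  rw [Nat.card_coe_set_eq, ← index_stabilizer]
  exact index_dvd_card _

theorem card_orbit_eq_of_normal [IsPretransitive G X] (N : Subgroup G) [N.Normal] (x y : X) :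
    Nat.card (orbit N y) = Nat.card (orbit N x) := by
  obtain ⟨g, rfl⟩ := exists_smul_eq G x y
  rw [← smul_orbit_eq_orbit_smul, Set.natCard_smul_set]

theorem card_eq_card_orbit_mul_card_orbitRel_quotient [Finite X] (x : X)
    (h : ∀ y : X, Nat.card (orbit G y) = Nat.card (orbit G x)) :
    Nat.card X = Nat.card (orbit G x) * Nat.card (orbitRel.Quotient G X) := by
  have := Fintype.ofFinite (orbitRel.Quotient G X)
  rw [Nat.card_congr (selfEquivSigmaOrbits G X), Nat.card_sigma]
  simp only [h, Finset.sum_const, smul_eq_mul, Finset.card_univ, Nat.card_eq_fintype_card,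
    mul_comm]

theorem card_mul_card_orbitRel_quotient_dvd [Finite X] [IsPretransitive G X] [Nonempty X]
    (N : Subgroup G) [N.Normal] :
    Nat.card N * Nat.card (orbitRel.Quotient N X) ∣ Nat.card G := by
  obtain ⟨x⟩ := ‹Nonempty X›
  have hX := card_eq_card_orbit_mul_card_orbitRel_quotient x (card_orbit_eq_of_normal N x)
  have hG : Nat.card (stabilizer G x) * Nat.card X = Nat.card G := by
    rw [← index_stabilizer_of_transitive G x, card_mul_index]
  have hN : Nat.card (stabilizer N x) * Nat.card (orbit N x) = Nat.card N := by
    rw [Nat.card_coe_set_eq, ← index_stabilizer, card_mul_index]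
  have hstab : Nat.card (stabilizer N x) ∣ Nat.card (stabilizer G x) := by
    rw [← card_map_of_injective N.subtype_injective]
    refine card_dvd_of_le ?_
    rintro _ ⟨w, hw, rfl⟩
    exact hw
  rw [← hN, ← hG, hX, mul_assoc]
  exact mul_dvd_mul_right hstab _

end Actions

section CommActions

variable {A X : Type*} [Group A] [IsMulCommutative A] [MulAction A X]

theorem pow_card_orbit_smul (a : A) (x : X) : a ^ Nat.card (orbit A x) • x = x := by
  rw [Nat.card_coe_set_eq, ← index_stabilizer]
  exact pow_index_mem (stabilizer A x) a

theorem smul_eq_self_of_mem_stabilizer {a : A} {x y : X} (ha : a ∈ stabilizer A x)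
    (hy : y ∈ orbit A x) : a • y = y := by
  obtain ⟨b, rfl⟩ := hy
  rw [smul_smul, mul_comm, mul_smul, mem_stabilizer_iff.mp ha]

theorem stabilizer_eq_bot [FaithfulSMul A X] [IsPretransitive A X] (x : X) :
    stabilizer A x = ⊥ := by
  rw [eq_bot_iff_forall]
  intro a ha
  exact eq_of_smul_eq_smul fun y => by
    rw [smul_eq_self_of_mem_stabilizer ha (exists_smul_eq A x y), one_smul]

theorem one_lt_card_orbitRel_quotient [Finite X] [Nonempty X] [FaithfulSMul A X]
    (h : Nat.card X ≠ Nat.card A) : 1 < Nat.card (orbitRel.Quotient A X) := by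
  obtain ⟨x⟩ := ‹Nonempty X›
  have : Nonempty (orbitRel.Quotient A X) := ⟨Quotient.mk'' x⟩
  refine lt_of_le_of_ne Nat.card_pos fun h1 => h ?_
  have : IsPretransitive A X :=
    (pretransitive_iff_subsingleton_quotient A X).mpr (Nat.card_eq_one_iff_unique.mp h1.symm).1
  rw [← index_stabilizer_of_transitive A x, stabilizer_eq_bot x, index_bot]

end CommActions

section CommNormal

variable {G X : Type*} [Group G] [MulAction G X] [FaithfulSMul G X] [IsPretransitive G X]

theorem orderOf_dvd_card_orbit (N : Subgroup G) [N.Normal] [IsMulCommutative N] {t : G}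
    (ht : t ∈ N) (x : X) : orderOf t ∣ Nat.card (orbit N x) := by
  refine orderOf_dvd_of_pow_eq_one (eq_of_smul_eq_smul (α := X) fun y => ?_)
  have hy := pow_card_orbit_smul (⟨t, ht⟩ : N) y
  rw [card_orbit_eq_of_normal N x y, Subgroup.smul_def, SubmonoidClass.coe_pow] at hy
  rw [hy, one_smul]

end CommNormal

section Coxeter44

variable {G : Type*} [Group G]

structure IsCoxeter44 (ρ0 ρ1 ρ2 : G) : Prop where
  sq_zero : ρ0 ^ 2 = 1
  sq_one : ρ1 ^ 2 = 1
  sq_two : ρ2 ^ 2 = 1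
  pow_zero_one : (ρ0 * ρ1) ^ 4 = 1
  pow_one_two : (ρ1 * ρ2) ^ 4 = 1
  pow_zero_two : (ρ0 * ρ2) ^ 2 = 1

namespace IsCoxeter44

variable {ρ0 ρ1 ρ2 u v : G}

theorem commute_zero_two (h : IsCoxeter44 ρ0 ρ1 ρ2) : Commute ρ0 ρ2 :=
  commute_of_sq_eq_one h.sq_zero h.sq_two h.pow_zero_two

theorem commute_zero_conj (h : IsCoxeter44 ρ0 ρ1 ρ2) : Commute ρ0 (ρ1 * ρ0 * ρ1) :=
  commute_mul_mul_of_pow_four_eq_one h.sq_zero h.sq_one h.pow_zero_one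

theorem commute_two_conj (h : IsCoxeter44 ρ0 ρ1 ρ2) : Commute ρ2 (ρ1 * ρ2 * ρ1) :=
  commute_mul_mul_of_pow_four_eq_one h.sq_two h.sq_one (mul_pow_eq_one_comm h.pow_one_two)

theorem inv_conj_zero (h : IsCoxeter44 ρ0 ρ1 ρ2) : (ρ1 * ρ0 * ρ1)⁻¹ = ρ1 * ρ0 * ρ1 := by
  simp only [mul_inv_rev, inv_eq_of_sq_eq_one h.sq_one, inv_eq_of_sq_eq_one h.sq_zero, mul_assoc]

theorem inv_conj_two (h : IsCoxeter44 ρ0 ρ1 ρ2) : (ρ1 * ρ2 * ρ1)⁻¹ = ρ1 * ρ2 * ρ1 := by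
  simp only [mul_inv_rev, inv_eq_of_sq_eq_one h.sq_one, inv_eq_of_sq_eq_one h.sq_two, mul_assoc]

theorem two_eq_mul (h : IsCoxeter44 ρ0 ρ1 ρ2) (hu : u = ρ0 * ρ1 * ρ2 * ρ1) :
    ρ2 = ρ1 * ρ0 * u * ρ1 := by
  have h2 : ρ2 = ρ1⁻¹ * ρ0⁻¹ * u * ρ1⁻¹ := by rw [hu]; group
  rwa [inv_eq_of_sq_eq_one h.sq_zero, inv_eq_of_sq_eq_one h.sq_one] at h2

theorem v_eq_conj (h : IsCoxeter44 ρ0 ρ1 ρ2) (hv : v = ρ1 * u * ρ1) : v = ρ1 * u * ρ1⁻¹ := by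
  rw [hv, inv_eq_of_sq_eq_one h.sq_one]

theorem v_eq_mul (h : IsCoxeter44 ρ0 ρ1 ρ2) (hu : u = ρ0 * ρ1 * ρ2 * ρ1)
    (hv : v = ρ1 * u * ρ1) : v = ρ1 * ρ0 * ρ1 * ρ2 := by
  rw [h.v_eq_conj hv, hu]
  group

theorem commute_zero_v (h : IsCoxeter44 ρ0 ρ1 ρ2) (hu : u = ρ0 * ρ1 * ρ2 * ρ1)
    (hv : v = ρ1 * u * ρ1) : Commute ρ0 v := by
  rw [h.v_eq_mul hu hv]
  exact h.commute_zero_conj.mul_right h.commute_zero_two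

theorem commute_two_u (h : IsCoxeter44 ρ0 ρ1 ρ2) (hu : u = ρ0 * ρ1 * ρ2 * ρ1) : Commute ρ2 u := by
  rw [hu]
  simpa only [mul_assoc] using h.commute_zero_two.symm.mul_right h.commute_two_conj

theorem commute_u_v (h : IsCoxeter44 ρ0 ρ1 ρ2) (hu : u = ρ0 * ρ1 * ρ2 * ρ1)
    (hv : v = ρ1 * u * ρ1) : Commute u v := by
  have hconj : Commute (ρ1 * ρ2 * ρ1) (ρ1 * ρ0 * ρ1) := by
    simpa only [inv_eq_of_sq_eq_one h.sq_one] using h.commute_zero_two.symm.conj ρ1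
  rw [h.v_eq_mul hu hv, hu]
  simpa only [mul_assoc] using (h.commute_zero_conj.mul_right h.commute_zero_two).mul_left
    (hconj.mul_right h.commute_two_conj.symm)

theorem conj_zero_u (h : IsCoxeter44 ρ0 ρ1 ρ2) (hu : u = ρ0 * ρ1 * ρ2 * ρ1) :
    ρ0 * u * ρ0⁻¹ = u⁻¹ :=
  calc ρ0 * u * ρ0⁻¹ = ρ0 ^ 2 * (ρ1 * ρ2 * ρ1) * ρ0⁻¹ := by rw [hu, sq]; group
    _ = (ρ1 * ρ2 * ρ1)⁻¹ * ρ0⁻¹ := by rw [h.sq_zero, one_mul, h.inv_conj_two]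
    _ = u⁻¹ := by rw [hu]; group

theorem conj_one_v (h : IsCoxeter44 ρ0 ρ1 ρ2) (hv : v = ρ1 * u * ρ1) : ρ1 * v * ρ1⁻¹ = u :=
  calc ρ1 * v * ρ1⁻¹ = ρ1 ^ 2 * u * (ρ1 ^ 2)⁻¹ := by rw [h.v_eq_conj hv, sq]; group
    _ = u := by rw [h.sq_one]; group

theorem conj_two_v (h : IsCoxeter44 ρ0 ρ1 ρ2) (hu : u = ρ0 * ρ1 * ρ2 * ρ1)
    (hv : v = ρ1 * u * ρ1) : ρ2 * v * ρ2⁻¹ = v⁻¹ :=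
  calc ρ2 * v * ρ2⁻¹ = ρ2 * (ρ1 * ρ0 * ρ1) := by rw [h.v_eq_mul hu hv]; group
    _ = ρ2⁻¹ * (ρ1 * ρ0 * ρ1)⁻¹ := by rw [inv_eq_of_sq_eq_one h.sq_two, h.inv_conj_zero]
    _ = v⁻¹ := by rw [h.v_eq_mul hu hv]; group

theorem normal_closure_u_v [Finite G] (h : IsCoxeter44 ρ0 ρ1 ρ2)
    (hu : u = ρ0 * ρ1 * ρ2 * ρ1) (hv : v = ρ1 * u * ρ1) (hgen : closure {ρ0, ρ1, ρ2} = ⊤) :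
    (closure {u, v}).Normal := by
  have hu_mem : u ∈ closure {u, v} := subset_closure (by simp)
  have hv_mem : v ∈ closure {u, v} := subset_closure (by simp)
  refine normal_closure_of_conj_mem hgen ?_
  simp only [Set.mem_insert_iff, Set.mem_singleton_iff, forall_eq_or_imp, forall_eq]
  refine ⟨⟨?_, ?_⟩, ⟨?_, ?_⟩, ⟨?_, ?_⟩⟩
  · rw [h.conj_zero_u hu]
    exact inv_mem hu_mem
  · rwa [(h.commute_zero_v hu hv).mul_inv_cancel]
  · rwa [← h.v_eq_conj hv]
  · rwa [h.conj_one_v hv]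
  · rwa [(h.commute_two_u hu).mul_inv_cancel]
  · rw [h.conj_two_v hu hv]
    exact inv_mem hv_mem

theorem index_closure_u_v_le [Finite G] (h : IsCoxeter44 ρ0 ρ1 ρ2)
    (hu : u = ρ0 * ρ1 * ρ2 * ρ1) (hv : v = ρ1 * u * ρ1) (hgen : closure {ρ0, ρ1, ρ2} = ⊤) :
    (closure {u, v}).index ≤ 8 := by
  have := h.normal_closure_u_v hu hv hgen
  set π := QuotientGroup.mk' (closure {u, v})
  have hπu : π u = 1 := (QuotientGroup.eq_one_iff u).2 (subset_closure (by simp))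
  have hgen' : closure {π ρ0, π ρ1} = ⊤ := by
    have h0 : π ρ0 ∈ closure {π ρ0, π ρ1} := subset_closure (by simp)
    have h1 : π ρ1 ∈ closure {π ρ0, π ρ1} := subset_closure (by simp)
    rw [eq_top_iff, ← map_top_of_surjective π (QuotientGroup.mk'_surjective _), ← hgen,
      MonoidHom.map_closure, closure_le]
    simp only [Set.image_insert_eq, Set.image_singleton, Set.insert_subset_iff,
      Set.singleton_subset_iff]
    refine ⟨h0, h1, ?_⟩
    rw [h.two_eq_mul hu, map_mul, map_mul, map_mul, hπu, mul_one]
    exact mul_mem (mul_mem h1 h0) h1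
  calc (closure {u, v}).index ≤ 2 * orderOf (π ρ0 * π ρ1) :=
        card_le_two_mul_orderOf_mul (by rw [← map_pow, h.sq_zero, map_one])
          (by rw [← map_pow, h.sq_one, map_one]) hgen'
    _ ≤ 2 * 4 := by
        refine Nat.mul_le_mul_left _ (orderOf_le_of_pow_eq_one (by norm_num) ?_)
        rw [← map_mul, ← map_pow, h.pow_zero_one, map_one]

theorem card_closure_u_v [Finite G] (h : IsCoxeter44 ρ0 ρ1 ρ2)
    (hu : u = ρ0 * ρ1 * ρ2 * ρ1) (hv : v = ρ1 * u * ρ1) (hgen : closure {ρ0, ρ1, ρ2} = ⊤)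
    {s : ℕ} (hs : 0 < s) (hus : u ^ s = 1) (hG : Nat.card G = 8 * s ^ 2) :
    Nat.card (closure {u, v}) = s ^ 2 ∧ orderOf u = s := by
  have hvs : v ^ s = 1 := by rw [h.v_eq_conj hv, conj_pow, hus, mul_one, mul_inv_cancel]
  have hou := orderOf_le_of_pow_eq_one hs hus
  have hov := orderOf_le_of_pow_eq_one hs hvs
  have hle := card_closure_pair_le_of_commute (h.commute_u_v hu hv)
  have hge : 8 * s ^ 2 ≤ Nat.card (closure {u, v}) * 8 := by
    rw [← hG, ← card_mul_index]
    exact Nat.mul_le_mul_left _ (h.index_closure_u_v_le hu hv hgen)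
  constructor <;> nlinarith

end IsCoxeter44

end Coxeter44

theorem stmt4 (s : ℕ) (hs : 2 < s)
    (G : Type*) [Group G] [Finite G] (ρ0 ρ1 ρ2 : G)
    (hgen : Subgroup.closure {ρ0, ρ1, ρ2} = ⊤)
    (hr0 : ρ0 ^ 2 = 1) (hr1 : ρ1 ^ 2 = 1) (hr2 : ρ2 ^ 2 = 1)
    (h01 : (ρ0 * ρ1) ^ 4 = 1) (h12 : (ρ1 * ρ2) ^ 4 = 1) (h02 : (ρ0 * ρ2) ^ 2 = 1)
    (hmap : (ρ0 * ρ1 * ρ2 * ρ1) ^ s = 1)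
    (hG : Nat.card G = 8 * s ^ 2)
    (u v : G) (hu : u = ρ0 * ρ1 * ρ2 * ρ1) (hv : v = ρ1 * u * ρ1)
    (T : Subgroup G) (hT : T = Subgroup.closure {u, v})
    (X : Type*) [Finite X] [MulAction G X]
    (hfaith : ∀ a : G, (∀ x : X, a • x = x) → a = 1)
    (htrans : ∀ x y : X, ∃ a : G, a • x = y)
    (n : ℕ) (hn : Nat.card X = n)
    (hns : n ≠ s ^ 2) :
    ∃ k m a b : ℕ, 1 < k ∧ 1 < m ∧
      (∀ x : X, Nat.card (MulAction.orbit T x) = k) ∧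
      Nat.card (MulAction.orbitRel.Quotient T X) = m ∧
      n = k * m ∧
      0 < a ∧ 0 < b ∧ s = Nat.lcm a b ∧ k = a * b ∧
      m * s ^ 2 ∣ Nat.card G := by
  subst hT hn
  have hρ : IsCoxeter44 ρ0 ρ1 ρ2 := ⟨hr0, hr1, hr2, h01, h12, h02⟩
  have hs0 : 0 < s := by omega
  have := hρ.normal_closure_u_v hu hv hgen
  have := isMulCommutative_closure_pair (hρ.commute_u_v hu hv)
  obtain ⟨hcardT, horder⟩ := hρ.card_closure_u_v hu hv hgen hs0 (hu ▸ hmap) hG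
  have : IsPretransitive G X := ⟨htrans⟩
  have : FaithfulSMul G X := faithfulSMul_iff.mpr hfaith
  have : Nontrivial G := Finite.one_lt_card_iff_nontrivial.mp (by rw [hG]; nlinarith)
  have : Nonempty X := nonempty_of_faithfulSMul (M := G)
  obtain ⟨x⟩ := ‹Nonempty X›
  set T := closure {u, v}
  set k := Nat.card (orbit T x)
  have hks : k ∣ s ^ 2 := hcardT ▸ card_orbit_dvd_card x
  have hsk : s ∣ k := horder ▸ orderOf_dvd_card_orbit T (subset_closure (by simp)) x
  have hk : 1 < k := by
    have := Nat.le_of_dvd (Nat.pos_of_dvd_of_pos hks (by positivity)) hsk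
    omega
  obtain ⟨a, b, ha, hb, hlcm, hab⟩ := Nat.exists_lcm_eq_of_dvd_of_dvd_sq hs0 hsk hks
  have horbit : ∀ y, Nat.card (orbit T y) = k := card_orbit_eq_of_normal T x
  refine ⟨k, _, a, b, hk, one_lt_card_orbitRel_quotient (hcardT ▸ hns), horbit, rfl,
    card_eq_card_orbit_mul_card_orbitRel_quotient x horbit, ha, hb, hlcm, hab, ?_⟩
  rw [← hcardT, mul_comm]
  exact card_mul_card_orbitRel_quotient_dvd T
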